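/- arXiv:2202.00943 — 4 statements merged into one kernel-verified Lean document; each statement's English description precedes it below -/
import Mathlib

section
/- Let u_k, v_k, b₁, R_k, r_k be as above with b₁ ≠ 0. Then the inverse relations hold: u_k = R_k · (∑_{j=1}^m r_j + n) / (∑_{j=1}^m R_j − 1) and v_k = (r_k / R_k) · (∑_{j=1}^m R_j − 1) / (∑_{j=1}^m r_j + n), provided ∑_j R_j ≠ 1, ∑_j r_j + n ≠ 0, and R_k ≠ 0. -/
/-! The definition of `b₁` says exactly that `∑ r_j + n = b₁ (∑ R_j - 1)`; substituting this into
the right-hand sides, they reduce to `u_k = b₁ R_k` and `v_k = r_k / (b₁ R_k)`. -/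

open Finset

theorem sum_mul_add_eq_mul_sum_div_sub_one {ι K : Type*} [Fintype ι] [Field K]
    (u v : ι → K) (n b : K) (hb : b ≠ 0) (hb_def : b = -∑ k, u k * (v k - 1) - n) :
    ∑ k, u k * v k + n = b * (∑ k, u k / b - 1) := by
  rw [mul_sub, mul_one, ← sum_div, mul_div_cancel₀ _ hb, hb_def]
  simp only [mul_sub, mul_one, sum_sub_distrib]
  ring

theorem stmt1_general (m : ℕ) (n : ℝ) (u v R r : Fin m → ℝ) (b1 : ℝ)
    (hb1 : b1 = -∑ k, u k * (v k - 1) - n)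
    (hR : ∀ k, R k = u k / b1)
    (hr : ∀ k, r k = u k * v k)
    (hsum : ∑ j, R j ≠ 1)
    (hRne : ∀ k, R k ≠ 0) :
    ∀ k, u k = R k * (∑ j, r j + n) / (∑ j, R j - 1) ∧
      v k = (r k / R k) * (∑ j, R j - 1) / (∑ j, r j + n) := by
  intro k
  obtain ⟨hu, hb⟩ := div_ne_zero_iff.mp (hR k ▸ hRne k)
  have hS : ∑ j, R j - 1 ≠ 0 := sub_ne_zero.mpr hsum
  have hkey : ∑ j, r j + n = b1 * (∑ j, R j - 1) := by
    simp only [hr, hR]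
    exact sum_mul_add_eq_mul_sum_div_sub_one u v n b1 hb hb1
  rw [hkey, hR k, hr k]
  constructor <;> field_simp

theorem stmt1 (m : ℕ) (n : ℝ) (u v R r : Fin m → ℝ) (b1 : ℝ)
    (hb1 : b1 = -∑ k, u k * (v k - 1) - n)
    (hb1ne : b1 ≠ 0)
    (hR : ∀ k, R k = u k / b1)
    (hr : ∀ k, r k = u k * v k)
    (hsum : ∑ j, R j ≠ 1)
    (hsumr : ∑ j, r j + n ≠ 0)
    (hRne : ∀ k, R k ≠ 0) :
    ∀ k, u k = R k * (∑ j, r j + n) / (∑ j, R j - 1) ∧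
      v k = (r k / R k) * (∑ j, R j - 1) / (∑ j, r j + n) :=
  stmt1_general m n u v R r b1 hb1 hR hr hsum hRne
end

section
/- Suppose u_k, v_k (k = 1,…,m) are smooth functions of t⃗ satisfying the coupled system δu_k = −t_k u_k − u_k ∑_{j=1}^m u_j(v_j−1)(2v_k + v_j − 1) − 2n u_k v_k + (2n+α)u_k and δv_k = t_k v_k + (v_k−1)∑_{j=1}^m u_j(v_j−1)(v_k + v_j) + (n+α)(v_k−1)² − α v_k(v_k−1), where δ = ∑_k t_k ∂_{t_k}. Define b₁ = −∑_k u_k(v_k − 1) − n. Then δ b₁ = −∑_{k=1}^m t_k u_k − b₁ ∑_{k=1}^m u_k (v_k − 1)². -/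
open Finset

/-- The Euler-type operator δ = ∑ₖ tₖ ∂ₖ. -/
noncomputable def deltaOp {m : ℕ} (g : (Fin m → ℝ) → ℝ) (t : Fin m → ℝ) : ℝ :=
  ∑ k, t k * fderiv ℝ g t (Pi.single k 1)

theorem stmt12 (m : ℕ) (n α : ℝ) (u v : Fin m → (Fin m → ℝ) → ℝ)
    (hu : ∀ k, ContDiff ℝ (⊤ : ℕ∞) (u k)) (hv : ∀ k, ContDiff ℝ (⊤ : ℕ∞) (v k))
    (hequ : ∀ k (t : Fin m → ℝ), deltaOp (u k) t
      = -(t k) * u k t - u k t * ∑ j, u j t * (v j t - 1) * (2 * v k t + v j t - 1)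
        - 2 * n * u k t * v k t + (2 * n + α) * u k t)
    (heqv : ∀ k (t : Fin m → ℝ), deltaOp (v k) t
      = t k * v k t + (v k t - 1) * ∑ j, u j t * (v j t - 1) * (v k t + v j t)
        + (n + α) * (v k t - 1) ^ 2 - α * v k t * (v k t - 1))
    (t : Fin m → ℝ) :
    deltaOp (fun x => -∑ k, u k x * (v k x - 1) - n) t
      = -∑ k, t k * u k t
        - (-∑ k, u k t * (v k t - 1) - n) * ∑ k, u k t * (v k t - 1) ^ 2 := by
  classical
  have hud : ∀ k, DifferentiableAt ℝ (u k) t := fun k =>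
    ((hu k).differentiable (by simp)).differentiableAt
  have hvd : ∀ k, DifferentiableAt ℝ (v k) t := fun k =>
    ((hv k).differentiable (by simp)).differentiableAt
  have h1 : ∀ k : Fin m, HasFDerivAt (fun x => u k x * (v k x - 1))
      ((u k t) • (fderiv ℝ (v k) t) + (v k t - 1) • (fderiv ℝ (u k) t)) t := by
    intro k
    have := ((hud k).hasFDerivAt).mul (((hvd k).hasFDerivAt).sub_const 1)
    exact this
  have hL : HasFDerivAt (fun x => -∑ k, u k x * (v k x - 1) - n)
      (-(∑ k : Fin m, ((u k t) • (fderiv ℝ (v k) t) + (v k t - 1) • (fderiv ℝ (u k) t)))) t := by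
    have h2 := (HasFDerivAt.sum (fun k (_ : k ∈ Finset.univ) => h1 k)).neg
    simpa using h2.sub_const n
  have hfd := hL.fderiv
  have hswap : deltaOp (fun x => -∑ k, u k x * (v k x - 1) - n) t
      = -∑ k, (u k t * deltaOp (v k) t + (v k t - 1) * deltaOp (u k) t) := by
    unfold deltaOp
    rw [hfd]
    simp only [ContinuousLinearMap.neg_apply, ContinuousLinearMap.sum_apply,
      ContinuousLinearMap.add_apply, ContinuousLinearMap.smul_apply, smul_eq_mul,
      mul_neg, ← Finset.sum_neg_distrib, Finset.mul_sum]
    rw [Finset.sum_comm]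
    refine Finset.sum_congr rfl (fun k _ => ?_)
    rw [← Finset.sum_add_distrib, ← Finset.sum_neg_distrib]
    refine Finset.sum_congr rfl (fun i _ => ?_)
    ring
  rw [hswap]
  have hAB : ∀ k : Fin m, ∑ j, u j t * (v j t - 1) * (v k t + v j t)
      = (∑ j, u j t * (v j t - 1) * (2 * v k t + v j t - 1))
        + (1 - v k t) * ∑ j, u j t * (v j t - 1) := by
    intro k
    rw [Finset.mul_sum, ← Finset.sum_add_distrib]
    exact Finset.sum_congr rfl (fun j _ => by ring)
  have hterm : ∀ k : Fin m,
      u k t * deltaOp (v k) t + (v k t - 1) * deltaOp (u k) t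
      = t k * u k t
        - ((∑ j, u j t * (v j t - 1)) + n) * (u k t * (v k t - 1) ^ 2) := by
    intro k
    rw [hequ k t, heqv k t, hAB k]
    ring
  rw [Finset.sum_congr rfl (fun k _ => hterm k)]
  rw [Finset.sum_sub_distrib, ← Finset.mul_sum]
  ring
end

section
/- Suppose u_k, v_k satisfy the coupled Painlevé V system δu_k = −t_k u_k − u_k ∑_j u_j(v_j−1)(2v_k + v_j − 1) − 2n u_k v_k + (2n+α)u_k, δv_k = t_k v_k + (v_k−1)∑_j u_j(v_j−1)(v_k + v_j) + (n+α)(v_k−1)² − α v_k(v_k−1). Set r_k := u_k v_k, R_k := u_k/b₁ with b₁ = −∑_j u_j(v_j−1) − n ≠ 0, b₂ = −∑_j u_j v_j(v_j−1) + n + α, and assume each R_k ≠ 0. Then δ r_k = r_k²/R_k + b₁ b₂ R_k. -/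
open Finset

lemma deltaOp_mul {m : ℕ} (f g : (Fin m → ℝ) → ℝ) (t : Fin m → ℝ)
    (hf : DifferentiableAt ℝ f t) (hg : DifferentiableAt ℝ g t) :
    deltaOp (fun x => f x * g x) t = g t * deltaOp f t + f t * deltaOp g t := by
  simp only [deltaOp, fderiv_fun_mul hf hg, ContinuousLinearMap.add_apply,
    ContinuousLinearMap.smul_apply, smul_eq_mul, Finset.mul_sum, ← Finset.sum_add_distrib]
  exact Finset.sum_congr rfl fun j _ => by ring

theorem stmt13 (m : ℕ) (n α : ℝ) (u v : Fin m → (Fin m → ℝ) → ℝ)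
    (hu : ∀ k, ContDiff ℝ (⊤ : ℕ∞) (u k)) (hv : ∀ k, ContDiff ℝ (⊤ : ℕ∞) (v k))
    (hequ : ∀ k (t : Fin m → ℝ), deltaOp (u k) t
      = -(t k) * u k t - u k t * ∑ j, u j t * (v j t - 1) * (2 * v k t + v j t - 1)
        - 2 * n * u k t * v k t + (2 * n + α) * u k t)
    (heqv : ∀ k (t : Fin m → ℝ), deltaOp (v k) t
      = t k * v k t + (v k t - 1) * ∑ j, u j t * (v j t - 1) * (v k t + v j t)
        + (n + α) * (v k t - 1) ^ 2 - α * v k t * (v k t - 1))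
    (b1 b2 : (Fin m → ℝ) → ℝ)
    (hb1 : ∀ t : Fin m → ℝ, b1 t = -∑ j, u j t * (v j t - 1) - n)
    (hb2 : ∀ t : Fin m → ℝ, b2 t = -∑ j, u j t * v j t * (v j t - 1) + n + α)
    (hb1ne : ∀ t : Fin m → ℝ, b1 t ≠ 0)
    (hRne : ∀ k (t : Fin m → ℝ), u k t / b1 t ≠ 0)
    (k : Fin m) (t : Fin m → ℝ) :
    deltaOp (fun x => u k x * v k x) t
      = (u k t * v k t) ^ 2 / (u k t / b1 t) + b1 t * b2 t * (u k t / b1 t) := by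
  have hu0 : u k t ≠ 0 := fun h => hRne k t (by simp [h])
  have hb0 := hb1ne t
  have key : (v k t - 1) * (∑ j, u j t * (v j t - 1) * (v k t + v j t))
      + (v k t) ^ 2 * (∑ j, u j t * (v j t - 1))
      + (∑ j, u j t * v j t * (v j t - 1))
      = v k t * (∑ j, u j t * (v j t - 1) * (2 * v k t + v j t - 1)) := by
    simp only [Finset.mul_sum, ← Finset.sum_add_distrib]
    exact Finset.sum_congr rfl fun j _ => by ring
  rw [deltaOp_mul _ _ _ ((hu k).differentiable (by simp) t) ((hv k).differentiable (by simp) t),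
    hequ k t, heqv k t]
  have h1 : (u k t * v k t) ^ 2 / (u k t / b1 t) = u k t * (v k t) ^ 2 * b1 t := by
    field_simp
  have h2 : b1 t * b2 t * (u k t / b1 t) = b2 t * u k t := by
    field_simp
  rw [h1, h2, hb1, hb2]
  
  linear_combination u k t * key
end

section
/- Suppose a smooth function R : (0, ∞) → ℝ with R(s) ∉ {0, 1} satisfies the ODE R'' = ((2R − 1)(R')²)/(2(R−1)R) − R'/s − α² R/(2s²(R−1)) + R(R−1)/(2s). Let Y(z) := 1 − 1/R(2z) (i.e. Y as a function of z = s/2). Then Y satisfies the Painlevé V equation with parameters (0, −α²/2, 1, 0): Y'' = (1/(2Y) + 1/(Y−1))(Y')² − Y'/z + (Y−1)²/z² · (−α²/(2Y)) + Y/z. -/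
theorem stmt18 (α : ℝ) (R : ℝ → ℝ) (hR : ContDiff ℝ (⊤ : ℕ∞) R)
    (hR0 : ∀ s, 0 < s → R s ≠ 0) (hR1 : ∀ s, 0 < s → R s ≠ 1)
    (hode : ∀ s, 0 < s → deriv (deriv R) s
      = ((2 * R s - 1) * (deriv R s) ^ 2) / (2 * (R s - 1) * R s) - deriv R s / s
        - α ^ 2 * R s / (2 * s ^ 2 * (R s - 1)) + R s * (R s - 1) / (2 * s))
    (Y : ℝ → ℝ) (hY : ∀ z, Y z = 1 - 1 / R (2 * z)) :
    ∀ z, 0 < z → deriv (deriv Y) z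
      = (1 / (2 * Y z) + 1 / (Y z - 1)) * (deriv Y z) ^ 2 - deriv Y z / z
        + ((Y z - 1) ^ 2 / z ^ 2) * (-α ^ 2 / (2 * Y z)) + Y z / z := by
  have hRd : Differentiable ℝ R := hR.differentiable (by simp)
  have hR2 : ContDiff ℝ ((⊤:ℕ∞):WithTop ℕ∞) R := hR.of_le (by simp)
  have hR'd : Differentiable ℝ (deriv R) :=
    (contDiff_infty_iff_deriv.mp hR2).2.differentiable (by simp)
  have hYfun : Y = fun z => 1 - 1 / R (2 * z) := funext hY
  have hcomp : ∀ z : ℝ, HasDerivAt (fun z : ℝ => R (2 * z)) (deriv R (2 * z) * 2) z := by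
    intro z
    have h2 : HasDerivAt (fun y : ℝ => 2 * y) 2 z := by
      simpa using (hasDerivAt_id z).const_mul (2 : ℝ)
    exact (hRd (2 * z)).hasDerivAt.comp z h2
  have hcomp' : ∀ z : ℝ, HasDerivAt (fun z : ℝ => deriv R (2 * z))
      (deriv (deriv R) (2 * z) * 2) z := by
    intro z
    have h2 : HasDerivAt (fun y : ℝ => 2 * y) 2 z := by
      simpa using (hasDerivAt_id z).const_mul (2 : ℝ)
    exact (hR'd (2 * z)).hasDerivAt.comp z h2
  have hderivY : ∀ z, 0 < z →
      HasDerivAt Y (2 * deriv R (2 * z) / R (2 * z) ^ 2) z := by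
    intro z hz
    have hne : R (2 * z) ≠ 0 := hR0 (2 * z) (by linarith)
    have h3 : HasDerivAt (fun z : ℝ => (R (2 * z))⁻¹)
        (-(deriv R (2 * z) * 2) / R (2 * z) ^ 2) z := (hcomp z).inv hne
    have h4 := h3.const_sub (1 : ℝ)
    have hfe : (fun x : ℝ => 1 - (R (2 * x))⁻¹) = Y := by
      funext x; rw [hY x, one_div]
    rw [hfe] at h4
    refine h4.congr_deriv ?_
    ring
  intro z hz
  have hs : (0:ℝ) < 2 * z := by linarith
  have hne : R (2 * z) ≠ 0 := hR0 (2 * z) hs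
  have hne1 : R (2 * z) - 1 ≠ 0 := sub_ne_zero.mpr (hR1 (2 * z) hs)
  -- deriv Y agrees with formula near z
  have heq : deriv Y =ᶠ[nhds z] fun x => 2 * deriv R (2 * x) / R (2 * x) ^ 2 := by
    filter_upwards [isOpen_Ioi.mem_nhds hz] with x hx
    exact (hderivY x hx).deriv
  have hD2 : HasDerivAt (fun x : ℝ => 2 * deriv R (2 * x) / R (2 * x) ^ 2)
      ((2 * (deriv (deriv R) (2 * z) * 2) * R (2 * z) ^ 2
        - 2 * deriv R (2 * z) * (2 * R (2 * z) ^ 1 * (deriv R (2 * z) * 2)))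
        / (R (2 * z) ^ 2) ^ 2) z := by
    have hnum : HasDerivAt (fun x : ℝ => 2 * deriv R (2 * x))
        (2 * (deriv (deriv R) (2 * z) * 2)) z := (hcomp' z).const_mul 2
    have hden : HasDerivAt (fun x : ℝ => R (2 * x) ^ 2)
        (2 * R (2 * z) ^ 1 * (deriv R (2 * z) * 2)) z := by
      simpa using (hcomp z).fun_pow 2
    exact hnum.div hden (pow_ne_zero 2 hne)
  have hd2 : deriv (deriv Y) z
      = (2 * (deriv (deriv R) (2 * z) * 2) * R (2 * z) ^ 2
        - 2 * deriv R (2 * z) * (2 * R (2 * z) ^ 1 * (deriv R (2 * z) * 2)))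
        / (R (2 * z) ^ 2) ^ 2 := by
    rw [heq.deriv_eq]
    exact hD2.deriv
  have hd1 : deriv Y z = 2 * deriv R (2 * z) / R (2 * z) ^ 2 := (hderivY z hz).deriv
  rw [hd2, hd1, hY z, hode (2 * z) hs]
  have hzne : z ≠ 0 := ne_of_gt hz
  have hYne : 1 - 1 / R (2 * z) - 1 ≠ 0 := by
    simp [hne]
  have hYne0 : (1 : ℝ) - 1 / R (2 * z) ≠ 0 := by
    rw [sub_ne_zero]
    intro h
    exact hne1 (by field_simp at h; linarith)
  field_simp
  ring
end
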